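/- Suppose strict feasibility fails for the nonempty spectrahedron F = {X ⪰ 0 : A(X) = b} (there is no X ≻ 0 with A(X) = b). Then every point of F is degenerate. -/

import Mathlib

open Matrix Set

noncomputable section

/-- The linear map `A X = (⟨Aᵢ, X⟩)ᵢ` (trace inner product). -/
def calA {n m : ℕ} (A : Fin m → Matrix (Fin n) (Fin n) ℝ)
    (X : Matrix (Fin n) (Fin n) ℝ) : Fin m → ℝ := fun i => (A i * X).trace

/-- The adjoint map `A* λ = ∑ᵢ λᵢ Aᵢ`. -/
def adjA {n m : ℕ} (A : Fin m → Matrix (Fin n) (Fin n) ℝ) (lam : Fin m → ℝ) :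
    Matrix (Fin n) (Fin n) ℝ := ∑ i, lam i • A i

/-- The spectrahedron `F = {X ⪰ 0 : A X = b}`. -/
def spectra {n m : ℕ} (A : Fin m → Matrix (Fin n) (Fin n) ℝ) (b : Fin m → ℝ) :
    Set (Matrix (Fin n) (Fin n) ℝ) := {X | X.PosSemidef ∧ calA A X = b}

/-- The PSD cone `Sⁿ₊` as a subset of matrix space. -/
def PSDcone (n : ℕ) : Set (Matrix (Fin n) (Fin n) ℝ) := {Y | Y.PosSemidef}

/-- `f` is a face of the convex cone `K`. -/
def IsFaceOfCone {k : ℕ} (f K : Set (Matrix (Fin k) (Fin k) ℝ)) : Prop :=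
  f ⊆ K ∧ Convex ℝ f ∧ (∀ c : ℝ, 0 ≤ c → ∀ x ∈ f, c • x ∈ f) ∧
    ∀ x ∈ K, ∀ y ∈ K, x + y ∈ f → x ∈ f ∧ y ∈ f

/-- `face(X, Sⁿ₊)`: the minimal face of `Sⁿ₊` containing `X`, i.e. the intersection of
all faces of `Sⁿ₊` containing `X`. -/
def minFaceOfPoint {n : ℕ} (X : Matrix (Fin n) (Fin n) ℝ) :
    Set (Matrix (Fin n) (Fin n) ℝ) :=
  ⋂₀ {g | IsFaceOfCone g (PSDcone n) ∧ X ∈ g}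

/-- The conjugate face `f^Δ = f^⊥ ∩ Sⁿ₊` of a subset `f` of `Sⁿ₊`. -/
def conjFace {n : ℕ} (f : Set (Matrix (Fin n) (Fin n) ℝ)) :
    Set (Matrix (Fin n) (Fin n) ℝ) :=
  {Z | Z.PosSemidef ∧ ∀ Y ∈ f, (Y * Z).trace = 0}

/-- `X` is a nondegenerate point: `span(face(X,Sⁿ₊)^Δ) ∩ range(A*) = {0}`. -/
def Nondegenerate {n m : ℕ} (A : Fin m → Matrix (Fin n) (Fin n) ℝ)
    (X : Matrix (Fin n) (Fin n) ℝ) : Prop :=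
  Submodule.span ℝ (conjFace (minFaceOfPoint X)) ⊓ Submodule.span ℝ (Set.range A) = ⊥


/-!
If no positive definite matrix satisfies `A(X) = b`, then `b` lies outside the image under `A`
of the open convex cone of matrices with positive quadratic form; this image is open because
`A` is surjective. Separating `b` from it by a hyperplane `λ` gives `Ψ = A*(λ)` with
`⟨Ψ, Y⟩ < ⟨λ, b⟩` on that cone, and since the cone is invariant under positive scaling and its
closure contains `Sⁿ₊`, `-Ψ ⪰ 0` and `⟨λ, b⟩ ≥ 0`. For `X ∈ F` we get
`0 ≤ ⟨X, -Ψ⟩ = -⟨λ, b⟩ ≤ 0`, so `-Ψ` lies in the conjugate face of `X` as well as in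
`range A*`. Nondegeneracy would force `Ψ = 0`, contradicting `0 = ⟨Ψ, I⟩ < ⟨λ, b⟩ = 0`.
-/

namespace Spectrahedron

open Filter Topology

lemma nonpos_and_nonneg_of_forall_pos_mul_lt {a c : ℝ} (h : ∀ t > 0, t * a < c) :
    a ≤ 0 ∧ 0 ≤ c := by
  have hlim : Tendsto (fun t => t * a) (𝓝[>] 0) (𝓝 0) :=
    ((continuous_mul_const a).tendsto' 0 0 (zero_mul a)).mono_left nhdsWithin_le_nhds
  refine ⟨?_, le_of_tendsto hlim (eventually_nhdsWithin_of_forall fun t ht => (h t ht).le)⟩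
  by_contra! ha
  have := h ((|c| + 1) / a) (by positivity)
  rw [div_mul_cancel₀ _ ha.ne'] at this
  linarith [le_abs_self c]

lemma nonpos_of_forall_pos_add_mul_nonpos {a c : ℝ} (h : ∀ ε > 0, a + ε * c ≤ 0) : a ≤ 0 := by
  have hlim : Tendsto (fun ε => a + ε * c) (𝓝[>] 0) (𝓝 a) :=
    ((continuous_const.add (continuous_mul_const c)).tendsto' 0 a (by simp)).mono_left
      nhdsWithin_le_nhds
  exact le_of_tendsto hlim (eventually_nhdsWithin_of_forall h)

lemma apply_eq_dotProduct_single {ι : Type*} [Fintype ι] [DecidableEq ι] (f : (ι → ℝ) →ₗ[ℝ] ℝ)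
    (v : ι → ℝ) : f v = (fun i => f (Pi.single i 1)) ⬝ᵥ v := by
  rw [LinearMap.pi_apply_eq_sum_univ f, dotProduct]
  refine Finset.sum_congr rfl fun i _ => ?_
  rw [smul_eq_mul, mul_comm]
  congr 2
  funext j
  simp [Pi.single_apply, eq_comm]

lemma trace_mul_vecMulVec_self {ι : Type*} [Fintype ι] (M : Matrix ι ι ℝ) (x : ι → ℝ) :
    (M * vecMulVec x x).trace = x ⬝ᵥ M *ᵥ x := by
  simp only [trace, diag, mul_apply, vecMulVec_apply, dotProduct, mulVec, Finset.mul_sum]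
  exact Finset.sum_congr rfl fun i _ => Finset.sum_congr rfl fun j _ => by ring

open scoped MatrixOrder in
lemma trace_mul_nonneg {ι : Type*} [Fintype ι] [DecidableEq ι] {X Z : Matrix ι ι ℝ}
    (hX : X.PosSemidef) (hZ : Z.PosSemidef) : 0 ≤ (X * Z).trace := by
  obtain ⟨B, rfl⟩ := CStarAlgebra.nonneg_iff_eq_star_mul_self.mp hZ.nonneg
  rw [← Matrix.mul_assoc, trace_mul_comm, ← Matrix.mul_assoc, star_eq_conjTranspose]
  exact (hX.mul_mul_conjTranspose_same B).trace_nonneg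

section QuadraticCone

variable {ι : Type*} [Fintype ι]

/-- Unlike the set of `PosDef` matrices, this cone is open in the full matrix space, since it
imposes no symmetry. -/
def posQuadCone (ι : Type*) [Fintype ι] : Set (Matrix ι ι ℝ) :=
  {Y | ∀ x, x ≠ 0 → 0 < x ⬝ᵥ Y *ᵥ x}

lemma smul_dotProduct_mulVec_smul (Y : Matrix ι ι ℝ) (c : ℝ) (x : ι → ℝ) :
    (c • x) ⬝ᵥ Y *ᵥ (c • x) = c * c * (x ⬝ᵥ Y *ᵥ x) := by
  simp only [mulVec_smul, smul_dotProduct, dotProduct_smul, smul_eq_mul]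
  ring

lemma posQuadCone_eq_sphere :
    posQuadCone ι = {Y | ∀ x ∈ Metric.sphere (0 : ι → ℝ) 1, 0 < x ⬝ᵥ Y *ᵥ x} := by
  ext Y
  refine ⟨fun hY x hx => hY x (ne_zero_of_mem_unit_sphere ⟨x, hx⟩), fun hY x hx => ?_⟩
  have hnorm : 0 < ‖x‖ := norm_pos_iff.mpr hx
  have hunit := hY (‖x‖⁻¹ • x) (by simp [norm_smul, hnorm.ne'])
  rw [smul_dotProduct_mulVec_smul] at hunit
  exact pos_of_mul_pos_right hunit (by positivity)

lemma isOpen_posQuadCone : IsOpen (posQuadCone ι) := by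
  have hcont : Continuous fun p : Matrix ι ι ℝ × (ι → ℝ) => p.2 ⬝ᵥ p.1 *ᵥ p.2 := by
    simp only [dotProduct, mulVec]
    fun_prop
  rw [posQuadCone_eq_sphere, isOpen_iff_mem_nhds]
  intro Y hY
  exact (isCompact_sphere 0 1).eventually_forall_of_forall_eventually fun x hx =>
    continuousAt_const.eventually_lt hcont.continuousAt (hY x hx)

lemma convex_posQuadCone : Convex ℝ (posQuadCone ι) := by
  intro Y₁ hY₁ Y₂ hY₂ a c ha hc hac x hx
  simp only [add_mulVec, smul_mulVec, dotProduct_add, dotProduct_smul, smul_eq_mul]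
  rcases ha.eq_or_lt with rfl | ha
  · simpa [show c = 1 by linarith] using hY₂ x hx
  · exact add_pos_of_pos_of_nonneg (mul_pos ha (hY₁ x hx)) (mul_nonneg hc (hY₂ x hx).le)

lemma smul_mem_posQuadCone {Y : Matrix ι ι ℝ} (hY : Y ∈ posQuadCone ι) {t : ℝ} (ht : 0 < t) :
    t • Y ∈ posQuadCone ι := fun x hx => by
  simpa [smul_mulVec, dotProduct_smul] using mul_pos ht (hY x hx)

lemma _root_.Matrix.PosDef.mem_posQuadCone {Y : Matrix ι ι ℝ} (hY : Y.PosDef) :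
    Y ∈ posQuadCone ι := fun x hx => by
  simpa using hY.dotProduct_mulVec_pos hx

lemma posDef_of_mem_posQuadCone {Y : Matrix ι ι ℝ} (hY : Y ∈ posQuadCone ι) :
    ((2 : ℝ)⁻¹ • (Y + Yᵀ)).PosDef := by
  refine PosDef.of_dotProduct_mulVec_pos ?_ fun x hx => ?_
  · simp [IsHermitian, transpose_add, add_comm]
  · have hYt : x ⬝ᵥ Yᵀ *ᵥ x = x ⬝ᵥ Y *ᵥ x := by
      rw [dotProduct_mulVec, vecMul_transpose, dotProduct_comm]
    simp only [star_trivial, smul_mulVec, add_mulVec, dotProduct_smul, dotProduct_add, hYt,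
      smul_eq_mul]
    linarith [hY x hx]

lemma neg_posSemidef_of_forall_trace_mul_lt [DecidableEq ι] {Ψ : Matrix ι ι ℝ}
    (hΨ : Ψ.IsHermitian) {c : ℝ} (h : ∀ Y ∈ posQuadCone ι, (Ψ * Y).trace < c) :
    (-Ψ).PosSemidef ∧ 0 ≤ c := by
  have hscale : ∀ Y ∈ posQuadCone ι, (Ψ * Y).trace ≤ 0 ∧ 0 ≤ c := fun Y hY =>
    nonpos_and_nonneg_of_forall_pos_mul_lt fun t ht => by
      simpa [trace_smul] using h _ (smul_mem_posQuadCone hY ht)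
  refine ⟨PosSemidef.of_dotProduct_mulVec_nonneg hΨ.neg fun x => ?_,
    (hscale 1 PosDef.one.mem_posQuadCone).2⟩
  -- `x xᵀ` is a limit of the matrices `x xᵀ + ε I` of the open cone
  have hx : x ⬝ᵥ Ψ *ᵥ x ≤ 0 := nonpos_of_forall_pos_add_mul_nonpos fun ε hε => by
    have hmem : vecMulVec x x + ε • 1 ∈ posQuadCone ι :=
      (PosDef.posSemidef_add (by simpa using posSemidef_vecMulVec_self_star x)
        (PosDef.one.smul hε)).mem_posQuadCone
    simpa [Matrix.mul_add, trace_add, trace_mul_vecMulVec_self] using (hscale _ hmem).1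
  simpa [neg_mulVec] using hx

end QuadraticCone

variable {n m : ℕ}

section Faces

lemma isFaceOfCone_posSemidef_trace_mul_eq_zero {Z : Matrix (Fin n) (Fin n) ℝ}
    (hZ : Z.PosSemidef) :
    IsFaceOfCone {W | W.PosSemidef ∧ (W * Z).trace = 0} (PSDcone n) := by
  refine ⟨fun W hW => hW.1, ?_, ?_, ?_⟩
  · intro W₁ hW₁ W₂ hW₂ a c ha hc _
    refine ⟨(hW₁.1.smul ha).add (hW₂.1.smul hc), ?_⟩
    simp [Matrix.add_mul, trace_add, hW₁.2, hW₂.2]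
  · intro c hc W hW
    exact ⟨hW.1.smul hc, by simp [hW.2]⟩
  · intro W₁ hW₁ W₂ hW₂ hsum
    have h₁ := trace_mul_nonneg hW₁ hZ
    have h₂ := trace_mul_nonneg hW₂ hZ
    have h₁₂ : (W₁ * Z).trace + (W₂ * Z).trace = 0 := by
      rw [← trace_add, ← Matrix.add_mul]; exact hsum.2
    exact ⟨⟨hW₁, by linarith⟩, ⟨hW₂, by linarith⟩⟩

lemma mem_conjFace_minFaceOfPoint {X Z : Matrix (Fin n) (Fin n) ℝ} (hX : X.PosSemidef)
    (hZ : Z.PosSemidef) (hXZ : (X * Z).trace = 0) :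
    Z ∈ conjFace (minFaceOfPoint X) :=
  ⟨hZ, fun _ hY => (hY _ ⟨isFaceOfCone_posSemidef_trace_mul_eq_zero hZ, hX, hXZ⟩).2⟩

lemma Nondegenerate.eq_zero {A : Fin m → Matrix (Fin n) (Fin n) ℝ}
    {X Z : Matrix (Fin n) (Fin n) ℝ} (hX : Nondegenerate A X)
    (hZX : Z ∈ conjFace (minFaceOfPoint X)) (hZA : Z ∈ Submodule.span ℝ (range A)) : Z = 0 := by
  have hZ : Z ∈ Submodule.span ℝ (conjFace (minFaceOfPoint X)) ⊓ Submodule.span ℝ (range A) :=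
    ⟨Submodule.subset_span hZX, hZA⟩
  rwa [show _ ⊓ _ = ⊥ from hX, Submodule.mem_bot] at hZ

end Faces

section Adjoint

variable (A : Fin m → Matrix (Fin n) (Fin n) ℝ)

def calALinearMap : Matrix (Fin n) (Fin n) ℝ →ₗ[ℝ] Fin m → ℝ where
  toFun := calA A
  map_add' X Y := by funext i; simp [calA, Matrix.mul_add]
  map_smul' c X := by funext i; simp [calA]

lemma trace_adjA_mul (lam : Fin m → ℝ) (Y : Matrix (Fin n) (Fin n) ℝ) :
    (adjA A lam * Y).trace = lam ⬝ᵥ calA A Y := by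
  simp [adjA, calA, Finset.sum_mul, trace_sum, dotProduct]

lemma adjA_mem_span_range (lam : Fin m → ℝ) : adjA A lam ∈ Submodule.span ℝ (range A) :=
  Submodule.sum_mem _ fun i _ => Submodule.smul_mem _ _ (Submodule.subset_span ⟨i, rfl⟩)

variable {A}

lemma isHermitian_adjA (hA : ∀ i, (A i).IsSymm) (lam : Fin m → ℝ) : (adjA A lam).IsHermitian := by
  simp [IsHermitian, adjA, transpose_sum, fun i => (hA i).eq]

lemma calA_transpose (hA : ∀ i, (A i).IsSymm) (Y : Matrix (Fin n) (Fin n) ℝ) :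
    calA A Yᵀ = calA A Y := by
  funext i
  rw [calA, calA, ← (hA i).eq, ← transpose_mul, trace_transpose, (hA i).eq, trace_mul_comm]

lemma calA_surjective (hLI : LinearIndependent ℝ A) : Function.Surjective (calA A) := by
  by_contra hsurj
  obtain ⟨f, hf0, hker⟩ := Submodule.exists_le_ker_of_lt_top (LinearMap.range (calALinearMap A))
    (lt_top_iff_ne_top.mpr (mt LinearMap.range_eq_top.mp hsurj))
  set lam : Fin m → ℝ := fun i => f (Pi.single i 1)
  have hΨ : adjA A lam = 0 := by
    rw [← trace_mul_conjTranspose_self_eq_zero_iff, trace_adjA_mul, ← apply_eq_dotProduct_single]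
    exact hker ⟨_, rfl⟩
  have hlam : lam = 0 := funext (Fintype.linearIndependent_iff.mp hLI lam hΨ)
  exact hf0 ((Pi.basisFun ℝ (Fin m)).ext fun i => by simpa using congrFun hlam i)

end Adjoint

variable {A : Fin m → Matrix (Fin n) (Fin n) ℝ}

lemma exists_trace_adjA_mul_lt (hA : ∀ i, (A i).IsSymm) (hLI : LinearIndependent ℝ A)
    {b : Fin m → ℝ} (hb : ¬ ∃ X : Matrix (Fin n) (Fin n) ℝ, X.PosDef ∧ calA A X = b) :
    ∃ lam : Fin m → ℝ, ∀ Y ∈ posQuadCone (Fin n), (adjA A lam * Y).trace < lam ⬝ᵥ b := by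
  have hopen : IsOpen (calA A '' posQuadCone (Fin n)) :=
    (calALinearMap A).isOpenMap_of_finiteDimensional (calA_surjective hLI) _ isOpen_posQuadCone
  have hconv : Convex ℝ (calA A '' posQuadCone (Fin n)) :=
    convex_posQuadCone.linear_image (calALinearMap A)
  have hbC : b ∉ calA A '' posQuadCone (Fin n) := by
    rintro ⟨Y, hY, rfl⟩
    refine hb ⟨_, posDef_of_mem_posQuadCone hY, ?_⟩
    change calALinearMap A _ = calALinearMap A Y
    rw [map_smul, map_add]
    change (2 : ℝ)⁻¹ • (calA A Y + calA A Yᵀ) = calA A Y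
    rw [calA_transpose hA, ← two_smul ℝ, smul_smul, inv_mul_cancel₀ two_ne_zero, one_smul]
  obtain ⟨f, hf⟩ := geometric_hahn_banach_open_point hconv hopen hbC
  refine ⟨fun i => f (Pi.single i 1), fun Y hY => ?_⟩
  have hfY := hf _ ⟨Y, hY, rfl⟩
  rw [← f.coe_coe, apply_eq_dotProduct_single _ (calA A Y), apply_eq_dotProduct_single _ b] at hfY
  rwa [trace_adjA_mul]

end Spectrahedron

open Spectrahedron in
theorem stmt11_general {n m : ℕ} (A : Fin m → Matrix (Fin n) (Fin n) ℝ)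
    (hA : ∀ i, (A i).IsSymm) (hLI : LinearIndependent ℝ A) (b : Fin m → ℝ)
    (hnostrict : ¬ ∃ X : Matrix (Fin n) (Fin n) ℝ, X.PosDef ∧ calA A X = b) :
    ∀ X ∈ spectra A b, ¬ Nondegenerate A X := by
  rintro X ⟨hX, hXb⟩ hND
  obtain ⟨lam, hsep⟩ := exists_trace_adjA_mul_lt hA hLI hnostrict
  obtain ⟨hΨ, hb⟩ := neg_posSemidef_of_forall_trace_mul_lt (isHermitian_adjA hA lam) hsep
  have hXΨ : (X * -adjA A lam).trace = -(lam ⬝ᵥ b) := by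
    rw [Matrix.mul_neg, trace_neg, trace_mul_comm, trace_adjA_mul, hXb]
  have hb0 : lam ⬝ᵥ b = 0 := by linarith [trace_mul_nonneg hX hΨ]
  have hΨ0 : -adjA A lam = 0 :=
    hND.eq_zero (mem_conjFace_minFaceOfPoint hX hΨ (by rw [hXΨ, hb0, neg_zero]))
      (Submodule.neg_mem _ (adjA_mem_span_range A lam))
  simpa [neg_eq_zero.mp hΨ0, hb0] using hsep 1 PosDef.one.mem_posQuadCone

/-- if strict feasibility fails for the nonempty spectrahedron `F`, then
every point of `F` is degenerate. -/
theorem stmt11 {n m : ℕ} (A : Fin m → Matrix (Fin n) (Fin n) ℝ)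
    (hA : ∀ i, (A i).IsSymm) (hLI : LinearIndependent ℝ A) (b : Fin m → ℝ)
    (hFne : (spectra A b).Nonempty)
    (hnostrict : ¬ ∃ X : Matrix (Fin n) (Fin n) ℝ, X.PosDef ∧ calA A X = b) :
    ∀ X ∈ spectra A b, ¬ Nondegenerate A X :=
  stmt11_general A hA hLI b hnostrict
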